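/- arXiv:math/0103130 — 2 statements merged into one kernel-verified Lean document; each statement's English description precedes it below -/
import Mathlib

section
/- Let e ∈ ℝⁿ be a unit vector and R₁, R₂ ∈ O(n) with R₁e = R₂e = e and R₁ ≠ R₂. Define γ₁₂ := 2^{-n} ∫_{S^{n−1}} ( R₁Θ·R₂Θ − n(Θ·e)(Θ·e) ) dθ. Then γ₁₂ = −(ω_n/2ⁿ)·(2/n)·( dim E₋ + Σ_i (1 − cos θ_i) ) < 0, where E₋ is the (−1)-eigenspace of R₂^{-1}R₁ and θ_i ∈ (0,π) are the rotation angles of its 2-dimensional invariant blocks. -/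
/-!
The integrand is the quadratic form `Θ ⬝ᵥ (R₂ᵀ R₁ - n e eᵀ) Θ`. The sphere measure is invariant
under coordinate sign changes and coordinate swaps, so `∫ Θᵢ Θⱼ = δᵢⱼ ω / n`, and the integral is
`(ω / n) (tr (R₂⁻¹ R₁) - n) = -(2ω / n) (dim E₋ + Σᵢ (1 - cos θᵢ))`. The last factor is
nonnegative, and it vanishes only if `tr (R₂⁻¹ R₁) = n`, which for an orthogonal `Q` forces
`Q = 1` because `‖Q - 1‖²_F = 2 (n - tr Q)`.
-/

open MeasureTheory Metric Matrix

namespace LinearIsometryEquiv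

variable {E : Type*} [NormedAddCommGroup E] [InnerProductSpace ℝ E]

def sphereHomeomorph (T : E ≃ₗᵢ[ℝ] E) : sphere (0 : E) 1 ≃ₜ sphere (0 : E) 1 :=
  T.toHomeomorph.subtype fun x => by simp

@[simp]
lemma coe_sphereHomeomorph_apply (T : E ≃ₗᵢ[ℝ] E) (x : sphere (0 : E) 1) :
    (T.sphereHomeomorph x : E) = T x := rfl

open Pointwise in
lemma measurePreserving_sphereHomeomorph [FiniteDimensional ℝ E] [MeasurableSpace E]
    [BorelSpace E] {μ : Measure E} (T : E ≃ₗᵢ[ℝ] E) (hT : MeasurePreserving T μ μ) :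
    MeasurePreserving T.sphereHomeomorph μ.toSphere μ.toSphere := by
  refine ⟨T.sphereHomeomorph.continuous.measurable, Measure.ext fun s hs => ?_⟩
  have hcone : Set.Ioo (0 : ℝ) 1 • ((↑) '' (T.sphereHomeomorph ⁻¹' s) : Set E)
      = T ⁻¹' (Set.Ioo (0 : ℝ) 1 • ((↑) '' s)) := by
    ext x
    simp only [Set.mem_smul, Set.mem_image, Set.mem_preimage, Subtype.exists]
    constructor
    · rintro ⟨c, hc, _, ⟨a, ha, has, rfl⟩, rfl⟩
      exact ⟨c, hc, T a, ⟨T a, by simpa using ha, has, rfl⟩, by simp⟩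
    · rintro ⟨c, hc, _, ⟨a, ha, has, rfl⟩, hx⟩
      refine ⟨c, hc, T.symm a, ⟨T.symm a, by simpa using ha, ?_, rfl⟩, ?_⟩
      · convert has using 1
        ext
        simp
      · exact T.injective (by simpa using hx)
  rw [T.sphereHomeomorph.measurableEmbedding.map_apply, Measure.toSphere_apply' _ hs,
    Measure.toSphere_apply' _ (T.sphereHomeomorph.continuous.measurable hs), hcone,
    hT.measure_preimage_emb T.toHomeomorph.measurableEmbedding]

end LinearIsometryEquiv

section SphereMoments

variable {ι : Type*} [Fintype ι] {μ : Measure (sphere (0 : EuclideanSpace ℝ ι) 1)}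

lemma integrable_sphere_coord_mul_coord [IsFiniteMeasure μ] (i j : ι) :
    Integrable (fun Θ : sphere (0 : EuclideanSpace ℝ ι) 1 =>
      (Θ : EuclideanSpace ℝ ι) i * (Θ : EuclideanSpace ℝ ι) j) μ := by
  refine Continuous.integrable_of_hasCompactSupport ?_ (HasCompactSupport.of_compactSpace _)
  fun_prop

lemma sum_integral_sphere_coord_mul_self [IsFiniteMeasure μ] :
    ∑ i, ∫ Θ, (Θ : EuclideanSpace ℝ ι) i * (Θ : EuclideanSpace ℝ ι) i ∂μ = μ.real Set.univ := by
  have hnorm : ∀ Θ : sphere (0 : EuclideanSpace ℝ ι) 1,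
      ∑ i, (Θ : EuclideanSpace ℝ ι) i * (Θ : EuclideanSpace ℝ ι) i = 1 := fun Θ => by
    simpa [← sq] using (EuclideanSpace.real_norm_sq_eq (Θ : EuclideanSpace ℝ ι)).symm
  rw [← integral_finsetSum _ fun i _ => integrable_sphere_coord_mul_coord i i]
  simp [hnorm]

variable [DecidableEq ι]
  (hμ : ∀ T : EuclideanSpace ℝ ι ≃ₗᵢ[ℝ] EuclideanSpace ℝ ι,
    MeasurePreserving T.sphereHomeomorph μ μ)
include hμ

lemma integral_sphere_coord_mul_coord_of_ne {i j : ι} (hij : i ≠ j) :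
    ∫ Θ, (Θ : EuclideanSpace ℝ ι) i * (Θ : EuclideanSpace ℝ ι) j ∂μ = 0 := by
  let T : EuclideanSpace ℝ ι ≃ₗᵢ[ℝ] EuclideanSpace ℝ ι :=
    LinearIsometryEquiv.piLpCongrRight 2 fun k =>
      if k = i then LinearIsometryEquiv.neg ℝ else LinearIsometryEquiv.refl ℝ ℝ
  have hT : ∀ x : EuclideanSpace ℝ ι, T x i * T x j = -(x i * x j) := fun x => by
    simp [T, LinearIsometryEquiv.piLpCongrRight_apply, hij.symm]
  have h := (hμ T).integral_comp' (f := T.sphereHomeomorph.toMeasurableEquiv)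
    fun Θ => (Θ : EuclideanSpace ℝ ι) i * (Θ : EuclideanSpace ℝ ι) j
  simp only [Homeomorph.toMeasurableEquiv_coe, LinearIsometryEquiv.coe_sphereHomeomorph_apply,
    hT, integral_neg] at h
  linarith

lemma integral_sphere_coord_mul_self_eq (i j : ι) :
    ∫ Θ, (Θ : EuclideanSpace ℝ ι) i * (Θ : EuclideanSpace ℝ ι) i ∂μ
      = ∫ Θ, (Θ : EuclideanSpace ℝ ι) j * (Θ : EuclideanSpace ℝ ι) j ∂μ := by
  let T := LinearIsometryEquiv.piLpCongrLeft 2 ℝ ℝ (Equiv.swap i j)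
  have hT : ∀ x : EuclideanSpace ℝ ι, T x i = x j := fun x => by
    simp [T, LinearIsometryEquiv.piLpCongrLeft_apply]
  have h := (hμ T).integral_comp' (f := T.sphereHomeomorph.toMeasurableEquiv)
    fun Θ => (Θ : EuclideanSpace ℝ ι) i * (Θ : EuclideanSpace ℝ ι) i
  simp only [Homeomorph.toMeasurableEquiv_coe, LinearIsometryEquiv.coe_sphereHomeomorph_apply,
    hT] at h
  exact h.symm

variable [IsFiniteMeasure μ]

lemma integral_sphere_coord_mul_self (i : ι) :
    ∫ Θ, (Θ : EuclideanSpace ℝ ι) i * (Θ : EuclideanSpace ℝ ι) i ∂μ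
      = μ.real Set.univ / Fintype.card ι := by
  have hcard : (Fintype.card ι : ℝ) ≠ 0 :=
    Nat.cast_ne_zero.mpr (Fintype.card_pos_iff.mpr ⟨i⟩).ne'
  rw [← sum_integral_sphere_coord_mul_self,
    Finset.sum_congr rfl fun j _ => integral_sphere_coord_mul_self_eq hμ j i, Finset.sum_const,
    Finset.card_univ, nsmul_eq_mul, mul_div_cancel_left₀ _ hcard]

lemma integral_sphere_dotProduct_mulVec (M : Matrix ι ι ℝ) :
    ∫ Θ : sphere (0 : EuclideanSpace ℝ ι) 1,
        (Θ : EuclideanSpace ℝ ι).ofLp ⬝ᵥ M *ᵥ (Θ : EuclideanSpace ℝ ι).ofLp ∂μ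
      = μ.real Set.univ / Fintype.card ι * M.trace := by
  have hexpand : ∀ x : ι → ℝ, x ⬝ᵥ M *ᵥ x = ∑ i, ∑ j, M i j * (x i * x j) := fun x => by
    simp only [dotProduct, Matrix.mulVec, Finset.mul_sum]
    exact Finset.sum_congr rfl fun i _ => Finset.sum_congr rfl fun j _ => by ring
  have hrow : ∀ i, ∫ Θ : sphere (0 : EuclideanSpace ℝ ι) 1,
      ∑ j, M i j * ((Θ : EuclideanSpace ℝ ι) i * (Θ : EuclideanSpace ℝ ι) j) ∂μ
        = M i i * (μ.real Set.univ / Fintype.card ι) := fun i => by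
    rw [integral_finsetSum _ fun j _ => (integrable_sphere_coord_mul_coord i j).const_mul _,
      Finset.sum_eq_single i (fun j _ hji => by
        rw [integral_const_mul, integral_sphere_coord_mul_coord_of_ne hμ hji.symm, mul_zero])
        (by simp), integral_const_mul, integral_sphere_coord_mul_self hμ]
  simp_rw [hexpand]
  rw [integral_finsetSum _ fun i _ => integrable_finsetSum _ fun j _ =>
      (integrable_sphere_coord_mul_coord i j).const_mul (M i j),
    Finset.sum_congr rfl fun i _ => hrow i, ← Finset.sum_mul, mul_comm]
  rfl

end SphereMoments

namespace Matrix

variable {ι : Type*} [Fintype ι]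

lemma real_inner_mul_inner_eq_dotProduct_vecMulVec (x e : EuclideanSpace ℝ ι) :
    inner ℝ x e * inner ℝ x e = x.ofLp ⬝ᵥ vecMulVec e.ofLp e.ofLp *ᵥ x.ofLp := by
  simp [EuclideanSpace.inner_eq_star_dotProduct, vecMulVec_mulVec, dotProduct_comm]

variable [DecidableEq ι]

lemma inner_toEuclideanLin_toEuclideanLin (A B : Matrix ι ι ℝ) (x : EuclideanSpace ℝ ι) :
    inner ℝ (toEuclideanLin A x) (toEuclideanLin B x) = x.ofLp ⬝ᵥ (Bᵀ * A) *ᵥ x.ofLp := by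
  rw [EuclideanSpace.inner_eq_star_dotProduct]
  simp [toLpLin_apply, ← mulVec_mulVec, dotProduct_mulVec, vecMul_transpose]

lemma eq_one_of_mem_orthogonalGroup_of_trace_eq_card {Q : Matrix ι ι ℝ}
    (hQ : Q ∈ orthogonalGroup ι ℝ) (htr : Q.trace = Fintype.card ι) : Q = 1 := by
  have hQQ : Qᵀ * Q = 1 := (mem_orthogonalGroup_iff' ι ℝ).mp hQ
  rw [← sub_eq_zero, ← trace_conjTranspose_mul_self_eq_zero_iff,
    conjTranspose_eq_transpose_of_trivial, transpose_sub, transpose_one, sub_mul, mul_sub,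
    mul_sub, hQQ, one_mul, mul_one, trace_sub, trace_sub, trace_sub, trace_transpose, htr]
  simp

lemma trace_transpose_mul_ne_card_of_ne {R₁ R₂ : Matrix ι ι ℝ}
    (hR₁ : R₁ ∈ orthogonalGroup ι ℝ) (hR₂ : R₂ ∈ orthogonalGroup ι ℝ) (hne : R₁ ≠ R₂) :
    (R₂ᵀ * R₁).trace ≠ Fintype.card ι := fun htr => hne <| by
  have hone : R₂ᵀ * R₁ = 1 := eq_one_of_mem_orthogonalGroup_of_trace_eq_card
    (Submonoid.mul_mem _ (Unitary.star_mem hR₂) hR₁) htr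
  calc R₁ = R₂ * (R₂ᵀ * R₁) := by
        rw [← Matrix.mul_assoc, (mem_orthogonalGroup_iff _ _).mp hR₂, Matrix.one_mul]
    _ = R₂ := by rw [hone, Matrix.mul_one]

end Matrix

lemma integral_sphere_inner_toEuclideanLin_sub_mul_inner {ι : Type*} [Fintype ι] [DecidableEq ι]
    {μ : Measure (sphere (0 : EuclideanSpace ℝ ι) 1)} [IsFiniteMeasure μ]
    (hμ : ∀ T : EuclideanSpace ℝ ι ≃ₗᵢ[ℝ] EuclideanSpace ℝ ι,
      MeasurePreserving T.sphereHomeomorph μ μ)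
    (A B : Matrix ι ι ℝ) (c : ℝ) {e : EuclideanSpace ℝ ι} (he : ‖e‖ = 1) :
    ∫ Θ : sphere (0 : EuclideanSpace ℝ ι) 1,
        (inner ℝ (Matrix.toEuclideanLin A (Θ : EuclideanSpace ℝ ι))
            (Matrix.toEuclideanLin B (Θ : EuclideanSpace ℝ ι))
          - c * inner ℝ (Θ : EuclideanSpace ℝ ι) e * inner ℝ (Θ : EuclideanSpace ℝ ι) e) ∂μ
      = μ.real Set.univ / Fintype.card ι * ((Bᵀ * A).trace - c) := by
  have hee : e.ofLp ⬝ᵥ e.ofLp = 1 := by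
    have h := real_inner_self_eq_norm_sq e
    rw [he, EuclideanSpace.inner_eq_star_dotProduct] at h
    simpa using h
  simp_rw [mul_assoc, Matrix.inner_toEuclideanLin_toEuclideanLin,
    Matrix.real_inner_mul_inner_eq_dotProduct_vecMulVec, ← smul_eq_mul (a := c),
    ← dotProduct_smul, ← Matrix.smul_mulVec, ← dotProduct_sub, ← Matrix.sub_mulVec]
  rw [integral_sphere_dotProduct_mulVec hμ, Matrix.trace_sub, Matrix.trace_smul,
    Matrix.trace_vecMulVec, hee, smul_eq_mul, mul_one]

theorem stmt11_general (n : ℕ) (hn : 2 ≤ n)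
    (e : EuclideanSpace ℝ (Fin n)) (he : ‖e‖ = 1)
    (R₁ R₂ : Matrix (Fin n) (Fin n) ℝ)
    (hR₁ : R₁ ∈ Matrix.orthogonalGroup (Fin n) ℝ)
    (hR₂ : R₂ ∈ Matrix.orthogonalGroup (Fin n) ℝ)
    (hne : R₁ ≠ R₂)
    (μ : Measure (sphere (0 : EuclideanSpace ℝ (Fin n)) 1))
    (hμ : μ = (volume : Measure (EuclideanSpace ℝ (Fin n))).toSphere)
    (ω : ℝ) (hω : ω = (μ Set.univ).toReal)
    (dplus dminus m : ℕ) (θ : Fin m → ℝ)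
    (hdim : dplus + dminus + 2 * m = n)
    (htr : Matrix.trace (R₂⁻¹ * R₁) = (dplus : ℝ) - dminus + 2 * ∑ i, Real.cos (θ i))
    (γ : ℝ)
    (hγ : γ = (2 : ℝ) ^ (-(n : ℤ)) *
      ∫ Θ : sphere (0 : EuclideanSpace ℝ (Fin n)) 1,
        ((inner ℝ (Matrix.toEuclideanLin R₁ (Θ : EuclideanSpace ℝ (Fin n)))
                (Matrix.toEuclideanLin R₂ (Θ : EuclideanSpace ℝ (Fin n))) : ℝ)
          - n * (inner ℝ (Θ : EuclideanSpace ℝ (Fin n)) e : ℝ)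
              * (inner ℝ (Θ : EuclideanSpace ℝ (Fin n)) e : ℝ)) ∂μ) :
    γ = -(ω / 2 ^ n) * (2 / n) * ((dminus : ℝ) + ∑ i, (1 - Real.cos (θ i))) ∧ γ < 0 := by
  subst hμ
  rw [← measureReal_def] at hω
  set S := (dminus : ℝ) + ∑ i, (1 - Real.cos (θ i))
  rw [Matrix.inv_eq_left_inv ((Matrix.mem_orthogonalGroup_iff' _ _).mp hR₂)] at htr
  have htrS : (R₂ᵀ * R₁).trace = n - 2 * S := by
    rw [htr, ← hdim]
    simp only [S, Nat.cast_add, Nat.cast_mul, Nat.cast_ofNat, Finset.sum_sub_distrib,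
      Finset.sum_const, Finset.card_univ, Fintype.card_fin, nsmul_eq_mul, mul_one]
    ring
  have hS : 0 < S := lt_of_le_of_ne (add_nonneg (Nat.cast_nonneg _)
      (Finset.sum_nonneg fun i _ => sub_nonneg.2 (Real.cos_le_one _)))
    fun hS => trace_transpose_mul_ne_card_of_ne hR₁ hR₂ hne (by simp [htrS, ← hS])
  have hω₀ : 0 < ω := by
    have : Nonempty (Fin n) := ⟨⟨0, by omega⟩⟩
    have : NeZero (volume : Measure (EuclideanSpace ℝ (Fin n))).toSphere :=
      ⟨Measure.toSphere_ne_zero _⟩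
    exact hω ▸ measureReal_univ_pos
  have hγS : γ = -(ω / 2 ^ n) * (2 / n) * S := by
    rw [hγ, integral_sphere_inner_toEuclideanLin_sub_mul_inner
      (fun T => T.measurePreserving_sphereHomeomorph T.measurePreserving) _ _ _ he, htrS,
      Fintype.card_fin, ← hω, _root_.zpow_neg, zpow_natCast]
    ring
  refine ⟨hγS, hγS ▸ mul_neg_of_neg_of_pos (mul_neg_of_neg_of_pos ?_ (by positivity)) hS⟩
  exact neg_neg_of_pos (by positivity)

/-- for distinct `R₁, R₂ ∈ O(n)` fixing a common unit vector `e`,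
`γ₁₂ := 2^{-n} ∫_{S^{n-1}} (R₁Θ·R₂Θ - n (Θ·e)²) dθ` equals
`-(ω_n/2ⁿ)(2/n)(dim E₋ + Σᵢ(1 - cos θᵢ))` and is negative, where the block decomposition
data of `R₂⁻¹R₁` is encoded by the trace identity. -/
theorem stmt11 (n : ℕ) (hn : 2 ≤ n)
    (e : EuclideanSpace ℝ (Fin n)) (he : ‖e‖ = 1)
    (R₁ R₂ : Matrix (Fin n) (Fin n) ℝ)
    (hR₁ : R₁ ∈ Matrix.orthogonalGroup (Fin n) ℝ)
    (hR₂ : R₂ ∈ Matrix.orthogonalGroup (Fin n) ℝ)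
    (hR₁e : Matrix.toEuclideanLin R₁ e = e)
    (hR₂e : Matrix.toEuclideanLin R₂ e = e)
    (hne : R₁ ≠ R₂)
    (μ : Measure (sphere (0 : EuclideanSpace ℝ (Fin n)) 1))
    (hμ : μ = (volume : Measure (EuclideanSpace ℝ (Fin n))).toSphere)
    (ω : ℝ) (hω : ω = (μ Set.univ).toReal)
    (dplus dminus m : ℕ) (θ : Fin m → ℝ)
    (hθ : ∀ i, θ i ∈ Set.Ioo (0 : ℝ) Real.pi)
    (hdim : dplus + dminus + 2 * m = n)
    (htr : Matrix.trace (R₂⁻¹ * R₁) = (dplus : ℝ) - dminus + 2 * ∑ i, Real.cos (θ i))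
    (γ : ℝ)
    (hγ : γ = (2 : ℝ) ^ (-(n : ℤ)) *
      ∫ Θ : sphere (0 : EuclideanSpace ℝ (Fin n)) 1,
        ((inner ℝ (Matrix.toEuclideanLin R₁ (Θ : EuclideanSpace ℝ (Fin n)))
                (Matrix.toEuclideanLin R₂ (Θ : EuclideanSpace ℝ (Fin n))) : ℝ)
          - n * (inner ℝ (Θ : EuclideanSpace ℝ (Fin n)) e : ℝ)
              * (inner ℝ (Θ : EuclideanSpace ℝ (Fin n)) e : ℝ)) ∂μ) :
    γ = -(ω / 2 ^ n) * (2 / n) * ((dminus : ℝ) + ∑ i, (1 - Real.cos (θ i))) ∧ γ < 0 :=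
  stmt11_general n hn e he R₁ R₂ hR₁ hR₂ hne μ hμ ω hω dplus dminus m θ hdim htr γ hγ
end

section
/- Let x₁, x₂ ∈ ℝⁿ be distinct, R₁, R₂ ∈ O(n), e := (x₁−x₂)/|x₁−x₂|, and suppose e ∉ Im(I − R₂^{-1}R₁). Then the n-planes Π₁ = {x₁ + cos(π/n)x + i sin(π/n) R₁x : x ∈ ℝⁿ} and Π₂ = {x₂ + cos(π/n)x + i sin(π/n) R₂x : x ∈ ℝⁿ} in ℂⁿ ≅ ℝ²ⁿ are disjoint, where n ≥ 2 so that sin(π/n) ≠ 0. -/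
open Real

lemma toEuclideanLin_mul_apply (n : ℕ) (M N : Matrix (Fin n) (Fin n) ℝ)
    (x : EuclideanSpace ℝ (Fin n)) :
    Matrix.toEuclideanLin (M * N) x = Matrix.toEuclideanLin M (Matrix.toEuclideanLin N x) := by
  simp [Matrix.toEuclideanLin_apply, Matrix.mulVec_mulVec]

/-- if `e = (x₁ - x₂)/|x₁ - x₂| ∉ Im(I - R₂⁻¹R₁)` then the two `n`-planes
`Π₁ = {(x₁ + cos(π/n)x, sin(π/n)R₁x)}` and `Π₂ = {(x₂ + cos(π/n)x, sin(π/n)R₂x)}` in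
`ℂⁿ ≅ ℝⁿ × ℝⁿ` are disjoint. -/
theorem stmt16 (n : ℕ) (hn : 3 ≤ n)
    (x₁ x₂ : EuclideanSpace ℝ (Fin n)) (hx : x₁ ≠ x₂)
    (R₁ R₂ : Matrix (Fin n) (Fin n) ℝ)
    (hR₁ : R₁ ∈ Matrix.orthogonalGroup (Fin n) ℝ)
    (hR₂ : R₂ ∈ Matrix.orthogonalGroup (Fin n) ℝ)
    (he : (‖x₁ - x₂‖⁻¹ • (x₁ - x₂)) ∉
      LinearMap.range (Matrix.toEuclideanLin ((1 : Matrix (Fin n) (Fin n) ℝ) - R₂⁻¹ * R₁))) :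
    ({p : EuclideanSpace ℝ (Fin n) × EuclideanSpace ℝ (Fin n) |
        ∃ x : EuclideanSpace ℝ (Fin n),
          p = (x₁ + Real.cos (π / n) • x, Real.sin (π / n) • Matrix.toEuclideanLin R₁ x)} ∩
     {p : EuclideanSpace ℝ (Fin n) × EuclideanSpace ℝ (Fin n) |
        ∃ x : EuclideanSpace ℝ (Fin n),
          p = (x₂ + Real.cos (π / n) • x, Real.sin (π / n) • Matrix.toEuclideanLin R₂ x)})
      = ∅ := by
  have hnpos : (0:ℝ) < n := by positivity
  have hpin_pos : 0 < π / n := by positivity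
  have hpin_lt : π / n < π / 2 := by
    apply div_lt_div_of_pos_left Real.pi_pos (by norm_num)
    exact_mod_cast lt_of_lt_of_le (by norm_num) hn
  have hsin : Real.sin (π / n) ≠ 0 :=
    ne_of_gt (Real.sin_pos_of_pos_of_lt_pi hpin_pos (lt_trans hpin_lt (by linarith [Real.pi_pos])))
  have hcos : Real.cos (π / n) ≠ 0 :=
    ne_of_gt (Real.cos_pos_of_mem_Ioo ⟨by linarith, hpin_lt⟩)
  ext p
  simp only [Set.mem_inter_iff, Set.mem_setOf_eq, Set.mem_empty_iff_false, iff_false]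
  rintro ⟨⟨u, hu⟩, ⟨v, hv⟩⟩
  rw [hu] at hv
  have h1 : x₁ + Real.cos (π / n) • u = x₂ + Real.cos (π / n) • v := congrArg Prod.fst hv
  have h2 : Real.sin (π / n) • Matrix.toEuclideanLin R₁ u
      = Real.sin (π / n) • Matrix.toEuclideanLin R₂ v := congrArg Prod.snd hv
  -- from h2 : sin • R₁ u = sin • R₂ v, get R₁ u = R₂ v
  have hR : Matrix.toEuclideanLin R₁ u = Matrix.toEuclideanLin R₂ v :=
    smul_right_injective _ hsin h2
  have hu2 : IsUnit R₂ := ⟨⟨R₂, star R₂, (Matrix.mem_orthogonalGroup_iff _ _).mp hR₂,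
    (Matrix.mem_orthogonalGroup_iff' _ _).mp hR₂⟩, rfl⟩
  have hR₂inv : R₂⁻¹ * R₂ = 1 := Matrix.nonsing_inv_mul R₂ ((Matrix.isUnit_iff_isUnit_det _).mp hu2)
  have hveq : Matrix.toEuclideanLin (R₂⁻¹ * R₁) u = v := by
    rw [toEuclideanLin_mul_apply, hR, ← toEuclideanLin_mul_apply, hR₂inv]
    simp [Matrix.toEuclideanLin_apply]
  apply he
  -- x₁ - x₂ = cos • (v - u)
  have hx12 : x₁ - x₂ = Real.cos (π / n) • (v - u) := by
    have := h1
    rw [smul_sub]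
    abel_nf
    linear_combination (norm := module) this
  refine ⟨(-(‖x₁ - x₂‖⁻¹ * Real.cos (π / n))) • u, ?_⟩
  have hlin : (Matrix.toEuclideanLin ((1 : Matrix (Fin n) (Fin n) ℝ) - R₂⁻¹ * R₁)) u
      = u - v := by
    rw [map_sub, LinearMap.sub_apply, hveq]
    simp [Matrix.toEuclideanLin_apply]
  rw [map_smul, hlin, hx12, smul_smul]
  module
end
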